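/- For p ∈ S and v ∈ T_pS set η'_p(v) = p₂·v₁ − p₁·v₂, η''_p(v) = w₂(p)·(Dw₁(p)v) − w₁(p)·(Dw₂(p)v), and θ_p(v) = −w₁(p)·v₁ − w₂(p)·v₂. Then for every smooth u : ℂ² → ℂ, every p ∈ S and every v ∈ T_pS: Du(p)v = (Tu)(p)·η'_p(v) + (Xu)(p)·η''_p(v) + (Υu)(p)·θ_p(v), where Υu = X(Tu) − T(Xu). -/

import Mathlib

open Complex

/-- Wirtinger derivative ∂F/∂z_j at p. -/
noncomputable def wirtZ {n : ℕ} (F : (Fin n → ℂ) → ℂ) (p : Fin n → ℂ) (j : Fin n) : ℂ :=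
  (1/2) * (fderiv ℝ F p (Pi.single j 1) - I * fderiv ℝ F p (Pi.single j I))

/-- Wirtinger derivative ∂F/∂z̄_j at p. -/
noncomputable def wirtZbar {n : ℕ} (F : (Fin n → ℂ) → ℂ) (p : Fin n → ℂ) (j : Fin n) : ℂ :=
  (1/2) * (fderiv ℝ F p (Pi.single j 1) + I * fderiv ℝ F p (Pi.single j I))

/-- The projective dual coordinates w_j(z) = (∂ρ/∂z_j)/(Σ_k z_k ∂ρ/∂z_k). -/
noncomputable def wC {n : ℕ} (ρ : (Fin n → ℂ) → ℝ) (z : Fin n → ℂ) (j : Fin n) : ℂ :=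
  wirtZ (fun q => (ρ q : ℂ)) z j / ∑ k, z k * wirtZ (fun q => (ρ q : ℂ)) z k

/-- The operator T F = w₂ ∂F/∂z₁ − w₁ ∂F/∂z₂ + α₁ ∂F/∂z̄₁ + α₂ ∂F/∂z̄₂. -/
noncomputable def Top2 (ρ : (Fin 2 → ℂ) → ℝ) (α : (Fin 2 → ℂ) → Fin 2 → ℂ)
    (F : (Fin 2 → ℂ) → ℂ) (p : Fin 2 → ℂ) : ℂ :=
  wC ρ p 1 * wirtZ F p 0 - wC ρ p 0 * wirtZ F p 1
    + α p 0 * wirtZbar F p 0 + α p 1 * wirtZbar F p 1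

/-- The operator X F = b₁ ∂F/∂z̄₁ + b₂ ∂F/∂z̄₂. -/
noncomputable def Xop2 (b : (Fin 2 → ℂ) → Fin 2 → ℂ)
    (F : (Fin 2 → ℂ) → ℂ) (p : Fin 2 → ℂ) : ℂ :=
  b p 0 * wirtZbar F p 0 + b p 1 * wirtZbar F p 1

/-- The commutator Υ = [X, T]: ΥF = X(TF) − T(XF). -/
noncomputable def Ups2 (ρ : (Fin 2 → ℂ) → ℝ) (α b : (Fin 2 → ℂ) → Fin 2 → ℂ)
    (F : (Fin 2 → ℂ) → ℂ) (p : Fin 2 → ℂ) : ℂ :=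
  Xop2 b (Top2 ρ α F) p - Top2 ρ α (Xop2 b F) p

/-- η'_p(v) = p₂·v₁ − p₁·v₂. -/
noncomputable def etaP (p v : Fin 2 → ℂ) : ℂ := p 1 * v 0 - p 0 * v 1

/-- η''_p(v) = w₂(p)·(Dw₁(p)v) − w₁(p)·(Dw₂(p)v). -/
noncomputable def etaPP (ρ : (Fin 2 → ℂ) → ℝ) (p v : Fin 2 → ℂ) : ℂ :=
  wC ρ p 1 * fderiv ℝ (fun q => wC ρ q 0) p v - wC ρ p 0 * fderiv ℝ (fun q => wC ρ q 1) p v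

/-- θ_p(v) = −w₁(p)·v₁ − w₂(p)·v₂. -/
noncomputable def thetaF (ρ : (Fin 2 → ℂ) → ℝ) (p v : Fin 2 → ℂ) : ℂ :=
  -(wC ρ p 0) * v 0 - wC ρ p 1 * v 1


/-!
A real vector `v` is the complex tangent vector `(v, v̄)`. The commutator `Υ = [X, T]` is again
first order: its second-order terms cancel by symmetry of the Hessian, and since
`X w = (z₂, −z₁)` its `∂`-part at `p` is `−p`. So the claim is the identity
`(v, v̄) = η'(v) T + η''(v) X + θ(v) Υ` of complex tangent vectors at `p`.

The `∂`-parts agree because `Σ p_k w_k = 1`, so the difference is some `(0, r)`. Vector fields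
tangent to `S` kill functions vanishing on `S`; this gives `Υρ = 0` and `Υ w_j = w_j` at `p`,
hence `r · ∂̄ρ = 0` and `r · (w₂ ∂̄w₁ − w₁ ∂̄w₂) = 0`. In `ℂ²` the vectors annihilated by
`∂̄ρ ≠ 0` form the line spanned by `b`, and `b · (w₂ ∂̄w₁ − w₁ ∂̄w₂) = Σ p_k w_k = 1`; so `r = 0`.
-/

open ComplexConjugate

/-- `(ζ, ξ)` stands for the complex tangent vector `Σ ζ_j ∂/∂z_j + ξ_j ∂/∂z̄_j`. -/
abbrev CVec (n : ℕ) := (Fin n → ℂ) × (Fin n → ℂ)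

section Wirtinger

variable {n : ℕ} {F G : (Fin n → ℂ) → ℂ} {p : Fin n → ℂ}

noncomputable def wirtDir (V : CVec n) (F : (Fin n → ℂ) → ℂ) (p : Fin n → ℂ) : ℂ :=
  V.1 ⬝ᵥ (fun j => wirtZ F p j) + V.2 ⬝ᵥ (fun j => wirtZbar F p j)

lemma wirtDir_add (V W : CVec n) : wirtDir (V + W) F p = wirtDir V F p + wirtDir W F p := by
  simp only [wirtDir, Prod.fst_add, Prod.snd_add, add_dotProduct]
  ring

lemma wirtDir_sub (V W : CVec n) : wirtDir (V - W) F p = wirtDir V F p - wirtDir W F p := by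
  simp only [wirtDir, Prod.fst_sub, Prod.snd_sub, sub_dotProduct]
  ring

lemma wirtDir_smul (c : ℂ) (V : CVec n) : wirtDir (c • V) F p = c * wirtDir V F p := by
  simp only [wirtDir, Prod.smul_fst, Prod.smul_snd, smul_dotProduct, smul_eq_mul]
  ring

lemma wirtDir_eq_sum (V : CVec n) (q : Fin n → ℂ) :
    wirtDir V F q = ∑ j, (V.1 j * wirtZ F q j + V.2 j * wirtZbar F q j) := by
  simp only [wirtDir, dotProduct, Finset.sum_add_distrib]

lemma wirtZ_eq_wirtDir (F : (Fin n → ℂ) → ℂ) (p : Fin n → ℂ) (j : Fin n) :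
    wirtZ F p j = wirtDir (Pi.single j 1, 0) F p := by
  simp [wirtDir]

lemma wirtZbar_eq_wirtDir (F : (Fin n → ℂ) → ℂ) (p : Fin n → ℂ) (j : Fin n) :
    wirtZbar F p j = wirtDir (0, Pi.single j 1) F p := by
  simp [wirtDir]

lemma apply_single_eq_wirtinger (L : (Fin n → ℂ) →L[ℝ] ℂ) (j : Fin n) (c : ℂ) :
    L (Pi.single j c) = c * (1/2) * (L (Pi.single j 1) - I * L (Pi.single j I))
      + conj c * (1/2) * (L (Pi.single j 1) + I * L (Pi.single j I)) := by
  have hc : (Pi.single j c : Fin n → ℂ)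
      = c.re • (Pi.single j 1 : Fin n → ℂ) + c.im • (Pi.single j I : Fin n → ℂ) := by
    ext k
    by_cases hk : k = j
    · subst hk; simp
    · simp [hk]
  rw [hc, map_add, map_smul, map_smul, Complex.real_smul, Complex.real_smul]
  conv_rhs => rw [← Complex.re_add_im c]
  simp only [map_add, map_mul, Complex.conj_ofReal, Complex.conj_I]
  linear_combination (c.im : ℂ) * L (Pi.single j I) * Complex.I_sq

lemma fderiv_apply_eq_wirtDir (F : (Fin n → ℂ) → ℂ) (p v : Fin n → ℂ) :
    fderiv ℝ F p v = wirtDir (v, star v) F p := by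
  conv_lhs => rw [← Finset.univ_sum_single v, map_sum]
  rw [wirtDir_eq_sum]
  refine Finset.sum_congr rfl fun j _ => ?_
  rw [apply_single_eq_wirtinger, wirtZ, wirtZbar]
  simp only [Pi.star_apply, Complex.star_def]
  ring

noncomputable def reVec (V : CVec n) : Fin n → ℂ := fun j => (V.1 j + conj (V.2 j)) / 2

noncomputable def imVec (V : CVec n) : Fin n → ℂ := fun j => (V.1 j - conj (V.2 j)) / (2 * I)

lemma reVec_add_imVec (V : CVec n) :
    (reVec V, star (reVec V)) + I • (imVec V, star (imVec V)) = V := by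
  ext j <;> simp [reVec, imVec] <;> field_simp <;> ring_nf

lemma wirtDir_eq_fderiv (V : CVec n) (F : (Fin n → ℂ) → ℂ) (p : Fin n → ℂ) :
    wirtDir V F p = fderiv ℝ F p (reVec V) + I * fderiv ℝ F p (imVec V) := by
  conv_lhs => rw [← reVec_add_imVec V]
  rw [wirtDir_add, wirtDir_smul, fderiv_apply_eq_wirtDir, fderiv_apply_eq_wirtDir]

lemma wirtDir_fun_add (hF : DifferentiableAt ℝ F p) (hG : DifferentiableAt ℝ G p) (V : CVec n) :
    wirtDir V (fun q => F q + G q) p = wirtDir V F p + wirtDir V G p := by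
  simp only [wirtDir_eq_fderiv, fderiv_fun_add hF hG, add_apply]
  ring

lemma wirtDir_fun_neg (V : CVec n) : wirtDir V (fun q => -F q) p = -wirtDir V F p := by
  simp only [wirtDir_eq_fderiv, fderiv_fun_neg, neg_apply]
  ring

lemma wirtDir_fun_mul (hF : DifferentiableAt ℝ F p) (hG : DifferentiableAt ℝ G p) (V : CVec n) :
    wirtDir V (fun q => F q * G q) p = F p * wirtDir V G p + G p * wirtDir V F p := by
  simp only [wirtDir_eq_fderiv, fderiv_fun_mul hF hG, add_apply, smul_apply, smul_eq_mul]
  ring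

lemma wirtDir_fun_sum {ι : Type*} (s : Finset ι) {F : ι → (Fin n → ℂ) → ℂ}
    (hF : ∀ i ∈ s, DifferentiableAt ℝ (F i) p) (V : CVec n) :
    wirtDir V (fun q => ∑ i ∈ s, F i q) p = ∑ i ∈ s, wirtDir V (F i) p := by
  simp only [wirtDir_eq_fderiv, fderiv_fun_sum hF, sum_apply, Finset.sum_add_distrib,
    Finset.mul_sum]

lemma wirtDir_const (V : CVec n) (c : ℂ) : wirtDir V (fun _ => c) p = 0 := by
  simp [wirtDir_eq_fderiv]

lemma wirtDir_coord (V : CVec n) (j : Fin n) : wirtDir V (fun q => q j) p = V.1 j := by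
  have hL : fderiv ℝ (fun q : Fin n → ℂ => q j) p = ContinuousLinearMap.proj j :=
    (ContinuousLinearMap.proj (R := ℝ) (φ := fun _ : Fin n => ℂ) j).fderiv
  rw [wirtDir_eq_fderiv, hL]
  simp only [ContinuousLinearMap.proj_apply, reVec, imVec]
  field_simp
  ring

lemma differentiableAt_fderiv_apply (hF : ContDiffAt ℝ 2 F p) (h : Fin n → ℂ) :
    DifferentiableAt ℝ (fun q => fderiv ℝ F q h) p :=
  ((hF.fderiv_right (m := 1) le_rfl).differentiableAt one_ne_zero).clm_apply
    (differentiableAt_const h)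

lemma differentiableAt_wirtDir (hF : ContDiffAt ℝ 2 F p) (V : CVec n) :
    DifferentiableAt ℝ (fun q => wirtDir V F q) p := by
  simp only [wirtDir_eq_fderiv]
  exact (differentiableAt_fderiv_apply hF _).add
    ((differentiableAt_fderiv_apply hF _).const_mul I)

lemma differentiableAt_wirtZ (hF : ContDiffAt ℝ 2 F p) (j : Fin n) :
    DifferentiableAt ℝ (fun q => wirtZ F q j) p := by
  simpa only [wirtZ_eq_wirtDir] using differentiableAt_wirtDir hF _

lemma differentiableAt_wirtZbar (hF : ContDiffAt ℝ 2 F p) (j : Fin n) :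
    DifferentiableAt ℝ (fun q => wirtZbar F q j) p := by
  simpa only [wirtZbar_eq_wirtDir] using differentiableAt_wirtDir hF _

lemma fderiv_fderiv_apply_comm (hF : ContDiffAt ℝ 2 F p) (h k : Fin n → ℂ) :
    fderiv ℝ (fun q => fderiv ℝ F q h) p k = fderiv ℝ (fun q => fderiv ℝ F q k) p h := by
  have hD : DifferentiableAt ℝ (fderiv ℝ F) p :=
    (hF.fderiv_right (m := 1) le_rfl).differentiableAt one_ne_zero
  have hsymm : IsSymmSndFDerivAt ℝ F p :=
    hF.isSymmSndFDerivAt (by simp [minSmoothness_of_isRCLikeNormedField])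
  rw [fderiv_clm_apply hD (differentiableAt_const h),
    fderiv_clm_apply hD (differentiableAt_const k)]
  simpa using hsymm k h

lemma wirtDir_wirtDir_comm (hF : ContDiffAt ℝ 2 F p) (V W : CVec n) :
    wirtDir V (fun q => wirtDir W F q) p = wirtDir W (fun q => wirtDir V F q) p := by
  have hsplit : ∀ a b x : Fin n → ℂ,
      fderiv ℝ (fun q => fderiv ℝ F q a + I * fderiv ℝ F q b) p x
        = fderiv ℝ (fun q => fderiv ℝ F q a) p x + I * fderiv ℝ (fun q => fderiv ℝ F q b) p x := by
    intro a b x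
    rw [fderiv_fun_add (differentiableAt_fderiv_apply hF a)
      ((differentiableAt_fderiv_apply hF b).const_mul I),
      fderiv_const_mul (differentiableAt_fderiv_apply hF b)]
    simp
  simp only [wirtDir_eq_fderiv, hsplit]
  rw [fderiv_fderiv_apply_comm hF (reVec W) (reVec V),
    fderiv_fderiv_apply_comm hF (reVec W) (imVec V),
    fderiv_fderiv_apply_comm hF (imVec W) (reVec V),
    fderiv_fderiv_apply_comm hF (imVec W) (imVec V)]
  ring

end Wirtinger

section VectorFields

variable {n : ℕ} {F : (Fin n → ℂ) → ℂ} {p : Fin n → ℂ} {V W : (Fin n → ℂ) → CVec n}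

noncomputable def vfDeriv (U : CVec n) (W : (Fin n → ℂ) → CVec n) (p : Fin n → ℂ) : CVec n :=
  (fun j => wirtDir U (fun q => (W q).1 j) p, fun j => wirtDir U (fun q => (W q).2 j) p)

noncomputable def lieBracket (V W : (Fin n → ℂ) → CVec n) (p : Fin n → ℂ) : CVec n :=
  vfDeriv (V p) W p - vfDeriv (W p) V p

lemma differentiableAt_wirtDir_field (hF : ContDiffAt ℝ 2 F p) (hW : DifferentiableAt ℝ W p) :
    DifferentiableAt ℝ (fun q => wirtDir (W q) F q) p := by
  simp only [wirtDir_eq_sum]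
  exact DifferentiableAt.fun_sum fun j _ =>
    ((differentiableAt_pi.1 hW.fst j).fun_mul (differentiableAt_wirtZ hF j)).fun_add
      ((differentiableAt_pi.1 hW.snd j).fun_mul (differentiableAt_wirtZbar hF j))

lemma wirtDir_wirtDir_field (hF : ContDiffAt ℝ 2 F p) (hW : DifferentiableAt ℝ W p) (U : CVec n) :
    wirtDir U (fun q => wirtDir (W q) F q) p
      = wirtDir (vfDeriv U W p) F p + wirtDir U (fun q => wirtDir (W p) F q) p := by
  have hW1 : ∀ j, DifferentiableAt ℝ (fun q => (W q).1 j) p :=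
    fun j => differentiableAt_pi.1 hW.fst j
  have hW2 : ∀ j, DifferentiableAt ℝ (fun q => (W q).2 j) p :=
    fun j => differentiableAt_pi.1 hW.snd j
  have hZ := differentiableAt_wirtZ hF
  have hZbar := differentiableAt_wirtZbar hF
  simp only [wirtDir_eq_sum (F := F)]
  rw [wirtDir_fun_sum _ (fun j _ => ((hW1 j).fun_mul (hZ j)).fun_add ((hW2 j).fun_mul (hZbar j))),
    wirtDir_fun_sum _ (fun j _ => ((hZ j).const_mul _).fun_add ((hZbar j).const_mul _)),
    ← Finset.sum_add_distrib]
  refine Finset.sum_congr rfl fun j _ => ?_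
  rw [wirtDir_fun_add ((hW1 j).fun_mul (hZ j)) ((hW2 j).fun_mul (hZbar j)),
    wirtDir_fun_add ((hZ j).const_mul _) ((hZbar j).const_mul _),
    wirtDir_fun_mul (hW1 j) (hZ j), wirtDir_fun_mul (hW2 j) (hZbar j),
    wirtDir_fun_mul (differentiableAt_const _) (hZ j),
    wirtDir_fun_mul (differentiableAt_const _) (hZbar j), wirtDir_const, wirtDir_const]
  simp only [vfDeriv]
  ring

lemma wirtDir_sub_wirtDir_eq_lieBracket (hF : ContDiffAt ℝ 2 F p)
    (hV : DifferentiableAt ℝ V p) (hW : DifferentiableAt ℝ W p) :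
    wirtDir (V p) (fun q => wirtDir (W q) F q) p - wirtDir (W p) (fun q => wirtDir (V q) F q) p
      = wirtDir (lieBracket V W p) F p := by
  rw [wirtDir_wirtDir_field hF hW, wirtDir_wirtDir_field hF hV,
    wirtDir_wirtDir_comm hF (V p) (W p), lieBracket, wirtDir_sub]
  ring

end VectorFields

open Filter Topology in
theorem fderiv_apply_eq_zero_of_eq_zero_on_level {E G : Type*} [NormedAddCommGroup E]
    [NormedSpace ℝ E] [CompleteSpace E] [NormedAddCommGroup G] [NormedSpace ℝ G]
    {ρ : E → ℝ} {ρ' : E →L[ℝ] ℝ} {f : E → G} {p v : E} (hρ : HasStrictFDerivAt ρ ρ' p)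
    (hρ' : ρ' ≠ 0) (hf : DifferentiableAt ℝ f p) (hf0 : ∀ q, ρ q = ρ p → f q = 0)
    (hv : ρ' v = 0) : fderiv ℝ f p v = 0 := by
  have hsurj : (ρ' : E →ₗ[ℝ] ℝ).range = ⊤ :=
    Module.Dual.range_eq_top_of_ne_zero (fun h => hρ' (ContinuousLinearMap.coe_injective h))
  set γ := hρ.implicitFunction ρ ρ' hsurj (ρ p)
  have hγ : HasFDerivAt γ (ρ' : E →ₗ[ℝ] ℝ).ker.subtypeL 0 :=
    (hρ.to_implicitFunction hsurj).hasFDerivAt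
  have hγ0 : γ 0 = p := hρ.implicitFunction_apply_image hsurj
  have hfγ : f ∘ γ =ᶠ[𝓝 0] fun _ => 0 := by
    have hlevel := (tendsto_const_nhds.prodMk_nhds tendsto_id).eventually
      (hρ.map_implicitFunction_eq hsurj)
    filter_upwards [hlevel] with y hy using hf0 _ hy
  have hcomp : HasFDerivAt (f ∘ γ) ((fderiv ℝ f p).comp (ρ' : E →ₗ[ℝ] ℝ).ker.subtypeL) 0 :=
    HasFDerivAt.comp 0 (by rw [hγ0]; exact hf.hasFDerivAt) hγ
  have hzero := hcomp.unique ((hasFDerivAt_const 0 0).congr_of_eventuallyEq hfγ)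
  simpa using congrArg (fun L => L ⟨v, hv⟩) hzero

section RealDefiningFunction

variable {n : ℕ} {ρ : (Fin n → ℂ) → ℝ} {p : Fin n → ℂ}

lemma fderiv_ofReal_comp_apply (hρ : DifferentiableAt ℝ ρ p) (h : Fin n → ℂ) :
    fderiv ℝ (fun q => (ρ q : ℂ)) p h = (fderiv ℝ ρ p h : ℂ) := by
  have : HasFDerivAt (fun q => (ρ q : ℂ)) (ofRealCLM.comp (fderiv ℝ ρ p)) p :=
    ofRealCLM.hasFDerivAt.comp p hρ.hasFDerivAt
  rw [this.fderiv]
  rfl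

lemma wirtZbar_ofReal_comp (hρ : DifferentiableAt ℝ ρ p) (j : Fin n) :
    wirtZbar (fun q => (ρ q : ℂ)) p j = conj (wirtZ (fun q => (ρ q : ℂ)) p j) := by
  simp only [wirtZ, wirtZbar, fderiv_ofReal_comp_apply hρ, map_mul, map_sub, map_div₀, map_one,
    map_ofNat, Complex.conj_ofReal, Complex.conj_I]
  ring

lemma wirtZbar_ofReal_comp_ne_zero (hρ : DifferentiableAt ℝ ρ p) (hDρ : fderiv ℝ ρ p ≠ 0) :
    (fun j => wirtZbar (fun q => (ρ q : ℂ)) p j) ≠ 0 := by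
  intro hzero
  apply hDρ
  ext v
  have hZ : ∀ j, wirtZ (fun q => (ρ q : ℂ)) p j = 0 := fun j => by
    simpa [wirtZbar_ofReal_comp hρ] using congrFun hzero j
  have hv := fderiv_apply_eq_wirtDir (fun q => (ρ q : ℂ)) p v
  rw [fderiv_ofReal_comp_apply hρ] at hv
  simpa [wirtDir, hZ, congrFun hzero] using hv

/-- As `ρ` is real, `wirtDir V ρ = 0` makes both real directions `reVec V`, `imVec V` tangent. -/
lemma wirtDir_eq_of_eq_on_level {G H : (Fin n → ℂ) → ℂ} {V : CVec n}
    (hρ : ContDiffAt ℝ 1 ρ p) (hDρ : fderiv ℝ ρ p ≠ 0) (hG : DifferentiableAt ℝ G p)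
    (hH : DifferentiableAt ℝ H p) (hGH : ∀ q, ρ q = ρ p → G q = H q)
    (hV : wirtDir V (fun q => (ρ q : ℂ)) p = 0) :
    wirtDir V G p = wirtDir V H p := by
  have htan : ∀ h, fderiv ℝ ρ p h = 0 → fderiv ℝ G p h = fderiv ℝ H p h := fun h hh => by
    have := fderiv_apply_eq_zero_of_eq_zero_on_level (hρ.hasStrictFDerivAt one_ne_zero) hDρ
      (hG.sub hH) (fun q hq => sub_eq_zero.2 (hGH q hq)) hh
    rwa [fderiv_sub hG hH, sub_apply, sub_eq_zero] at this
  rw [wirtDir_eq_fderiv, fderiv_ofReal_comp_apply (hρ.differentiableAt one_ne_zero),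
    fderiv_ofReal_comp_apply (hρ.differentiableAt one_ne_zero)] at hV
  have hre := congrArg Complex.re hV
  have him := congrArg Complex.im hV
  simp only [Complex.add_re, Complex.add_im, Complex.ofReal_re, Complex.ofReal_im, Complex.mul_re,
    Complex.mul_im, Complex.I_re, Complex.I_im, Complex.zero_re, Complex.zero_im] at hre him
  rw [wirtDir_eq_fderiv, wirtDir_eq_fderiv, htan _ (by linarith), htan _ (by linarith)]

end RealDefiningFunction

section Smoothness

variable {n : ℕ} {p : Fin n → ℂ}

lemma contDiff_wirtZ {F : (Fin n → ℂ) → ℂ} (hF : ContDiff ℝ (⊤ : ℕ∞) F) (j : Fin n) :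
    ContDiff ℝ (⊤ : ℕ∞) (fun q => wirtZ F q j) := by
  simp only [wirtZ_eq_wirtDir, wirtDir_eq_fderiv]
  have hD := hF.fderiv_right (m := (⊤ : ℕ∞)) (by norm_cast)
  exact (hD.clm_apply contDiff_const).add (contDiff_const.mul (hD.clm_apply contDiff_const))

lemma contDiffAt_wC {ρ : (Fin n → ℂ) → ℝ} (hρ : ContDiff ℝ (⊤ : ℕ∞) ρ)
    (hden : ∑ k, p k * wirtZ (fun q => (ρ q : ℂ)) p k ≠ 0) (j : Fin n) :
    ContDiffAt ℝ (⊤ : ℕ∞) (fun q => wC ρ q j) p := by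
  have hρc : ContDiff ℝ (⊤ : ℕ∞) (fun q => (ρ q : ℂ)) := ofRealCLM.contDiff.comp hρ
  have hsum : ContDiff ℝ (⊤ : ℕ∞) (fun q => ∑ k, q k * wirtZ (fun q => (ρ q : ℂ)) q k) :=
    ContDiff.sum fun k _ => (contDiff_apply ℝ ℂ k).mul (contDiff_wirtZ hρc k)
  simp only [wC, div_eq_mul_inv]
  exact (contDiff_wirtZ hρc j).contDiffAt.mul (hsum.contDiffAt.inv hden)

end Smoothness

lemma sum_mul_wC {n : ℕ} {ρ : (Fin n → ℂ) → ℝ} {p : Fin n → ℂ}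
    (hden : ∑ k, p k * wirtZ (fun q => (ρ q : ℂ)) p k ≠ 0) : ∑ k, p k * wC ρ p k = 1 := by
  simp only [wC, mul_div_assoc', ← Finset.sum_div]
  exact div_self hden

lemma eq_zero_of_dotProduct_eq_zero {e g b r : Fin 2 → ℂ} (he : e ≠ 0) (hbe : b ⬝ᵥ e = 0)
    (hbg : b ⬝ᵥ g = 1) (hre : r ⬝ᵥ e = 0) (hrg : r ⬝ᵥ g = 0) : r = 0 := by
  simp only [dotProduct, Fin.sum_univ_two] at hbe hbg hre hrg
  have hcross : r 0 * b 1 - r 1 * b 0 = 0 := by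
    by_cases he0 : e 0 = 0
    · have he1 : e 1 ≠ 0 := fun he1 => he (by ext j; fin_cases j <;> simp [he0, he1])
      refine (mul_eq_zero.1 ?_).resolve_right he1
      linear_combination r 0 * hbe - b 0 * hre
    · refine (mul_eq_zero.1 ?_).resolve_right he0
      linear_combination b 1 * hre - r 1 * hbe
  ext j
  fin_cases j
  · show r 0 = 0
    linear_combination -r 0 * hbg + b 0 * hrg + g 1 * hcross
  · show r 1 = 0
    linear_combination -r 1 * hbg + b 1 * hrg - g 0 * hcross

section TangentialFields

variable {ρ : (Fin 2 → ℂ) → ℝ} {α b : (Fin 2 → ℂ) → Fin 2 → ℂ} {F G H : (Fin 2 → ℂ) → ℂ}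
  {p : Fin 2 → ℂ}

noncomputable def tField (ρ : (Fin 2 → ℂ) → ℝ) (α : (Fin 2 → ℂ) → Fin 2 → ℂ) (q : Fin 2 → ℂ) :
    CVec 2 :=
  (![wC ρ q 1, -wC ρ q 0], α q)

def xField (b : (Fin 2 → ℂ) → Fin 2 → ℂ) (q : Fin 2 → ℂ) : CVec 2 :=
  (0, b q)

lemma Top2_eq_wirtDir (F : (Fin 2 → ℂ) → ℂ) (q : Fin 2 → ℂ) :
    Top2 ρ α F q = wirtDir (tField ρ α q) F q := by
  simp [Top2, tField, wirtDir, dotProduct, Fin.sum_univ_two]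
  ring

lemma Xop2_eq_wirtDir (F : (Fin 2 → ℂ) → ℂ) (q : Fin 2 → ℂ) :
    Xop2 b F q = wirtDir (xField b q) F q := by
  simp [Xop2, xField, wirtDir, dotProduct, Fin.sum_univ_two]

lemma differentiableAt_tField (hw : ∀ j, DifferentiableAt ℝ (fun q => wC ρ q j) p)
    (hα : DifferentiableAt ℝ α p) : DifferentiableAt ℝ (tField ρ α) p := by
  refine DifferentiableAt.prodMk (differentiableAt_pi.2 fun j => ?_) hα
  fin_cases j
  · exact hw 1
  · exact (hw 0).neg

lemma differentiableAt_xField (hb : DifferentiableAt ℝ b p) :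
    DifferentiableAt ℝ (xField b) p :=
  (differentiableAt_const 0).prodMk hb

lemma Ups2_eq_wirtDir (hF : ContDiffAt ℝ 2 F p) (hT : DifferentiableAt ℝ (tField ρ α) p)
    (hX : DifferentiableAt ℝ (xField b) p) :
    Ups2 ρ α b F p = wirtDir (lieBracket (xField b) (tField ρ α) p) F p := by
  have hT' : Top2 ρ α F = fun q => wirtDir (tField ρ α q) F q := funext (Top2_eq_wirtDir F)
  have hX' : Xop2 b F = fun q => wirtDir (xField b q) F q := funext (Xop2_eq_wirtDir F)
  rw [Ups2, hT', hX', Xop2_eq_wirtDir, Top2_eq_wirtDir]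
  exact wirtDir_sub_wirtDir_eq_lieBracket hF hX hT

lemma Top2_ofReal_eq_zero (hα : α p 0 * wirtZbar (fun q => (ρ q : ℂ)) p 0
      + α p 1 * wirtZbar (fun q => (ρ q : ℂ)) p 1 = 0) :
    Top2 ρ α (fun q => (ρ q : ℂ)) p = 0 := by
  rw [Top2, wC, wC]
  linear_combination hα

lemma Top2_coord (j : Fin 2) : Top2 ρ α (fun q => q j) p = ![wC ρ p 1, -wC ρ p 0] j := by
  rw [Top2_eq_wirtDir, wirtDir_coord]
  rfl

lemma Top2_eq_of_eq_on_level (hρ : ContDiffAt ℝ 1 ρ p) (hDρ : fderiv ℝ ρ p ≠ 0)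
    (hα : α p 0 * wirtZbar (fun q => (ρ q : ℂ)) p 0 + α p 1 * wirtZbar (fun q => (ρ q : ℂ)) p 1 = 0)
    (hG : DifferentiableAt ℝ G p) (hH : DifferentiableAt ℝ H p)
    (hGH : ∀ q, ρ q = ρ p → G q = H q) : Top2 ρ α G p = Top2 ρ α H p := by
  rw [Top2_eq_wirtDir, Top2_eq_wirtDir]
  refine wirtDir_eq_of_eq_on_level hρ hDρ hG hH hGH ?_
  rw [← Top2_eq_wirtDir]
  exact Top2_ofReal_eq_zero hα

lemma Xop2_eq_of_eq_on_level (hρ : ContDiffAt ℝ 1 ρ p) (hDρ : fderiv ℝ ρ p ≠ 0)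
    (hb : b p 0 * wirtZbar (fun q => (ρ q : ℂ)) p 0 + b p 1 * wirtZbar (fun q => (ρ q : ℂ)) p 1 = 0)
    (hG : DifferentiableAt ℝ G p) (hH : DifferentiableAt ℝ H p)
    (hGH : ∀ q, ρ q = ρ p → G q = H q) : Xop2 b G p = Xop2 b H p := by
  rw [Xop2_eq_wirtDir, Xop2_eq_wirtDir]
  refine wirtDir_eq_of_eq_on_level hρ hDρ hG hH hGH ?_
  rw [← Xop2_eq_wirtDir]
  exact hb

section OnLevelSet

variable (hρ : ContDiffAt ℝ 2 ρ p) (hp : ρ p = 0) (hDρ : fderiv ℝ ρ p ≠ 0)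
  (hT : DifferentiableAt ℝ (tField ρ α) p) (hX : DifferentiableAt ℝ (xField b) p)
  (hαtan : ∀ q, ρ q = 0 →
    α q 0 * wirtZbar (fun x => (ρ x : ℂ)) q 0 + α q 1 * wirtZbar (fun x => (ρ x : ℂ)) q 1 = 0)
  (hbtan : ∀ q, ρ q = 0 →
    b q 0 * wirtZbar (fun x => (ρ x : ℂ)) q 0 + b q 1 * wirtZbar (fun x => (ρ x : ℂ)) q 1 = 0)
include hρ hp hDρ hT hX hαtan hbtan

lemma Ups2_eq_neg_Top2_of_eq_on_level (hG : ContDiffAt ℝ 2 G p) (hH : DifferentiableAt ℝ H p)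
    (hTG : ∀ q, ρ q = 0 → Top2 ρ α G q = 0) (hXG : ∀ q, ρ q = 0 → Xop2 b G q = H q) :
    Ups2 ρ α b G p = -Top2 ρ α H p := by
  have hρ1 : ContDiffAt ℝ 1 ρ p := hρ.of_le one_le_two
  have hTGd : DifferentiableAt ℝ (Top2 ρ α G) p := by
    rw [funext (Top2_eq_wirtDir (ρ := ρ) (α := α) G)]
    exact differentiableAt_wirtDir_field hG hT
  have hXGd : DifferentiableAt ℝ (Xop2 b G) p := by
    rw [funext (Xop2_eq_wirtDir (b := b) G)]
    exact differentiableAt_wirtDir_field hG hX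
  rw [Ups2, Xop2_eq_of_eq_on_level hρ1 hDρ (hbtan p hp) hTGd (differentiableAt_const 0)
      (fun q hq => hTG q (hq.trans hp)),
    Top2_eq_of_eq_on_level hρ1 hDρ (hαtan p hp) hXGd hH (fun q hq => hXG q (hq.trans hp)),
    Xop2_eq_wirtDir, wirtDir_const, zero_sub]

lemma Ups2_ofReal_eq_zero : Ups2 ρ α b (fun q => (ρ q : ℂ)) p = 0 := by
  have hρc : ContDiffAt ℝ 2 (fun q => (ρ q : ℂ)) p := ofRealCLM.contDiff.contDiffAt.comp p hρ
  rw [Ups2_eq_neg_Top2_of_eq_on_level hρ hp hDρ hT hX hαtan hbtan hρc (differentiableAt_const 0)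
    (fun q hq => Top2_ofReal_eq_zero (hαtan q hq)) hbtan, Top2_eq_wirtDir, wirtDir_const, neg_zero]

lemma Ups2_wC_zero (hw : ContDiffAt ℝ 2 (fun q => wC ρ q 0) p)
    (hTw : ∀ q, ρ q = 0 → Top2 ρ α (fun z => wC ρ z 0) q = 0)
    (hXw : ∀ q, ρ q = 0 → Xop2 b (fun z => wC ρ z 0) q = q 1) :
    Ups2 ρ α b (fun q => wC ρ q 0) p = wC ρ p 0 := by
  rw [Ups2_eq_neg_Top2_of_eq_on_level hρ hp hDρ hT hX hαtan hbtan hw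
    (differentiableAt_apply 1 p) hTw hXw, Top2_coord]
  simp

lemma Ups2_wC_one (hw : ContDiffAt ℝ 2 (fun q => wC ρ q 1) p)
    (hTw : ∀ q, ρ q = 0 → Top2 ρ α (fun z => wC ρ z 1) q = 0)
    (hXw : ∀ q, ρ q = 0 → Xop2 b (fun z => wC ρ z 1) q = -q 0) :
    Ups2 ρ α b (fun q => wC ρ q 1) p = wC ρ p 1 := by
  rw [Ups2_eq_neg_Top2_of_eq_on_level hρ hp hDρ hT hX hαtan hbtan hw
    (differentiableAt_apply 0 p).fun_neg hTw hXw, Top2_eq_wirtDir, wirtDir_fun_neg, wirtDir_coord]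
  simp [tField]

end OnLevelSet

lemma lieBracket_xField_tField_fst (hXw0 : Xop2 b (fun q => wC ρ q 0) p = p 1)
    (hXw1 : Xop2 b (fun q => wC ρ q 1) p = -p 0) :
    (lieBracket (xField b) (tField ρ α) p).1 = -p := by
  simp only [Xop2_eq_wirtDir, xField] at hXw0 hXw1
  ext j
  fin_cases j <;>
    simp [lieBracket, vfDeriv, tField, xField, wirtDir_const, wirtDir_fun_neg, hXw0, hXw1]

lemma Xop2_eq_dotProduct (F : (Fin 2 → ℂ) → ℂ) :
    Xop2 b F p = b p ⬝ᵥ fun j => wirtZbar F p j := by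
  simp [Xop2, dotProduct, Fin.sum_univ_two]

theorem tangent_vector_eq_frame_combination {Y : CVec 2} {v : Fin 2 → ℂ}
    (hρ : DifferentiableAt ℝ ρ p) (hDρ : fderiv ℝ ρ p ≠ 0)
    (hden : ∑ k, p k * wirtZ (fun q => (ρ q : ℂ)) p k ≠ 0)
    (hα : α p 0 * wirtZbar (fun q => (ρ q : ℂ)) p 0 + α p 1 * wirtZbar (fun q => (ρ q : ℂ)) p 1 = 0)
    (hb : b p 0 * wirtZbar (fun q => (ρ q : ℂ)) p 0 + b p 1 * wirtZbar (fun q => (ρ q : ℂ)) p 1 = 0)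
    (hTw0 : Top2 ρ α (fun q => wC ρ q 0) p = 0) (hTw1 : Top2 ρ α (fun q => wC ρ q 1) p = 0)
    (hXw0 : Xop2 b (fun q => wC ρ q 0) p = p 1) (hXw1 : Xop2 b (fun q => wC ρ q 1) p = -p 0)
    (hY : Y.1 = -p) (hYρ : wirtDir Y (fun q => (ρ q : ℂ)) p = 0)
    (hYw0 : wirtDir Y (fun q => wC ρ q 0) p = wC ρ p 0)
    (hYw1 : wirtDir Y (fun q => wC ρ q 1) p = wC ρ p 1)
    (hv : fderiv ℝ ρ p v = 0) :
    (v, star v) = etaP p v • tField ρ α p + etaPP ρ p v • xField b p + thetaF ρ p v • Y := by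
  set R := (v, star v) - (etaP p v • tField ρ α p + etaPP ρ p v • xField b p + thetaF ρ p v • Y)
    with hRdef
  have hpw : p 0 * wC ρ p 0 + p 1 * wC ρ p 1 = 1 := by
    simpa [Fin.sum_univ_two] using sum_mul_wC hden
  have hR1 : R.1 = 0 := by
    ext j
    fin_cases j <;> simp [R, hY, tField, xField, etaP, thetaF, Matrix.vecHead, Matrix.vecTail]
    · linear_combination -v 0 * hpw
    · linear_combination -v 1 * hpw
  have hR : ∀ F, wirtDir R F p = fderiv ℝ F p v
      - (etaP p v * Top2 ρ α F p + etaPP ρ p v * Xop2 b F p + thetaF ρ p v * wirtDir Y F p) :=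
    fun F => by
      rw [hRdef, wirtDir_sub, wirtDir_add, wirtDir_add, wirtDir_smul, wirtDir_smul, wirtDir_smul,
        ← fderiv_apply_eq_wirtDir, ← Top2_eq_wirtDir, ← Xop2_eq_wirtDir]
  have hRbar : ∀ F, wirtDir R F p = R.2 ⬝ᵥ fun j => wirtZbar F p j := fun F => by
    simp [wirtDir, hR1]
  suffices R = 0 from sub_eq_zero.1 this
  refine Prod.ext hR1 (eq_zero_of_dotProduct_eq_zero (wirtZbar_ofReal_comp_ne_zero hρ hDρ)
    (b := b p) (g := wC ρ p 1 • (fun j => wirtZbar (fun q => wC ρ q 0) p j)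
      - wC ρ p 0 • (fun j => wirtZbar (fun q => wC ρ q 1) p j)) ?_ ?_ ?_ ?_)
  · rw [← Xop2_eq_dotProduct]
    exact hb
  · rw [dotProduct_sub, dotProduct_smul, dotProduct_smul, ← Xop2_eq_dotProduct,
      ← Xop2_eq_dotProduct, hXw0, hXw1, smul_eq_mul, smul_eq_mul]
    linear_combination hpw
  · have hXρ : Xop2 b (fun q => (ρ q : ℂ)) p = 0 := hb
    rw [← hRbar, hR, fderiv_ofReal_comp_apply hρ, hv, Top2_ofReal_eq_zero hα, hXρ, hYρ]
    simp
  · rw [dotProduct_sub, dotProduct_smul, dotProduct_smul, ← hRbar, ← hRbar, hR, hR, hTw0, hTw1,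
      hXw0, hXw1, hYw0, hYw1, smul_eq_mul, smul_eq_mul]
    have hη : etaPP ρ p v = wC ρ p 1 * fderiv ℝ (fun q => wC ρ q 0) p v
        - wC ρ p 0 * fderiv ℝ (fun q => wC ρ q 1) p v := rfl
    linear_combination -(etaPP ρ p v) * hpw - hη

end TangentialFields

theorem differential_decomposition_general
    (ρ : (Fin 2 → ℂ) → ℝ) (hρ : ContDiff ℝ (⊤ : ℕ∞) ρ)
    (S : Set (Fin 2 → ℂ)) (hSdef : S = ρ ⁻¹' {0})
    (hDρ : ∀ p ∈ S, fderiv ℝ ρ p ≠ 0)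
    (hsum : ∀ p ∈ S, (∑ k, p k * wirtZ (fun q => (ρ q : ℂ)) p k) ≠ 0)
    (α b : (Fin 2 → ℂ) → Fin 2 → ℂ)
    (hα : ContDiff ℝ (⊤ : ℕ∞) α) (hb : ContDiff ℝ (⊤ : ℕ∞) b)
    (hαtan : ∀ p ∈ S,
      α p 0 * wirtZbar (fun q => (ρ q : ℂ)) p 0 + α p 1 * wirtZbar (fun q => (ρ q : ℂ)) p 1 = 0)
    (hbtan : ∀ p ∈ S,
      b p 0 * wirtZbar (fun q => (ρ q : ℂ)) p 0 + b p 1 * wirtZbar (fun q => (ρ q : ℂ)) p 1 = 0)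
    (hTw1 : ∀ p ∈ S, Top2 ρ α (fun z => wC ρ z 0) p = 0)
    (hTw2 : ∀ p ∈ S, Top2 ρ α (fun z => wC ρ z 1) p = 0)
    (hXw1 : ∀ p ∈ S, Xop2 b (fun z => wC ρ z 0) p = p 1)
    (hXw2 : ∀ p ∈ S, Xop2 b (fun z => wC ρ z 1) p = -(p 0))
    : ∀ u : (Fin 2 → ℂ) → ℂ, ContDiff ℝ (⊤ : ℕ∞) u → ∀ p ∈ S, ∀ v : Fin 2 → ℂ,
      fderiv ℝ ρ p v = 0 →
      fderiv ℝ u p v =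
        Top2 ρ α u p * etaP p v + Xop2 b u p * etaPP ρ p v + Ups2 ρ α b u p * thetaF ρ p v := by
  intro u hu p hp v hv
  subst hSdef
  have h2 : ((2 : ℕ∞) : WithTop ℕ∞) ≤ ((⊤ : ℕ∞) : WithTop ℕ∞) := by exact_mod_cast le_top
  have hw := fun j => (contDiffAt_wC hρ (hsum p hp) j).of_le h2
  have hρ2 := hρ.contDiffAt.of_le h2 (x := p)
  have hDρp := hDρ p hp
  have hT := differentiableAt_tField (fun j => (hw j).differentiableAt two_ne_zero)
    (hα.differentiable (by simp) p)
  have hX := differentiableAt_xField (hb.differentiable (by simp) p)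
  set Y := lieBracket (xField b) (tField ρ α) p
  have hY : ∀ F, ContDiffAt ℝ 2 F p → Ups2 ρ α b F p = wirtDir Y F p :=
    fun F hF => Ups2_eq_wirtDir hF hT hX
  have hdec := tangent_vector_eq_frame_combination (hρ2.differentiableAt two_ne_zero) hDρp
    (hsum p hp) (hαtan p hp) (hbtan p hp) (hTw1 p hp) (hTw2 p hp) (hXw1 p hp) (hXw2 p hp)
    (lieBracket_xField_tField_fst (hXw1 p hp) (hXw2 p hp))
    ((hY _ (ofRealCLM.contDiff.contDiffAt.comp p hρ2)).symm.trans
      (Ups2_ofReal_eq_zero hρ2 hp hDρp hT hX hαtan hbtan))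
    ((hY _ (hw 0)).symm.trans (Ups2_wC_zero hρ2 hp hDρp hT hX hαtan hbtan (hw 0) hTw1 hXw1))
    ((hY _ (hw 1)).symm.trans (Ups2_wC_one hρ2 hp hDρp hT hX hαtan hbtan (hw 1) hTw2 hXw2))
    hv
  rw [fderiv_apply_eq_wirtDir, hdec, wirtDir_add, wirtDir_add, wirtDir_smul, wirtDir_smul,
    wirtDir_smul, ← Top2_eq_wirtDir, ← Xop2_eq_wirtDir, ← hY u (hu.contDiffAt.of_le h2)]
  ring

theorem differential_decomposition
    (ρ : (Fin 2 → ℂ) → ℝ) (hρ : ContDiff ℝ (⊤ : ℕ∞) ρ)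
    (S : Set (Fin 2 → ℂ)) (hSdef : S = ρ ⁻¹' {0}) (hSne : S.Nonempty)
    (hDρ : ∀ p ∈ S, fderiv ℝ ρ p ≠ 0)
    (hsum : ∀ p ∈ S, (∑ k, p k * wirtZ (fun q => (ρ q : ℂ)) p k) ≠ 0)
    (α b : (Fin 2 → ℂ) → Fin 2 → ℂ)
    (hα : ContDiff ℝ (⊤ : ℕ∞) α) (hb : ContDiff ℝ (⊤ : ℕ∞) b)
    (hαtan : ∀ p ∈ S,
      α p 0 * wirtZbar (fun q => (ρ q : ℂ)) p 0 + α p 1 * wirtZbar (fun q => (ρ q : ℂ)) p 1 = 0)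
    (hbtan : ∀ p ∈ S,
      b p 0 * wirtZbar (fun q => (ρ q : ℂ)) p 0 + b p 1 * wirtZbar (fun q => (ρ q : ℂ)) p 1 = 0)
    (hTw1 : ∀ p ∈ S, Top2 ρ α (fun z => wC ρ z 0) p = 0)
    (hTw2 : ∀ p ∈ S, Top2 ρ α (fun z => wC ρ z 1) p = 0)
    (hXw1 : ∀ p ∈ S, Xop2 b (fun z => wC ρ z 0) p = p 1)
    (hXw2 : ∀ p ∈ S, Xop2 b (fun z => wC ρ z 1) p = -(p 0))
    : ∀ u : (Fin 2 → ℂ) → ℂ, ContDiff ℝ (⊤ : ℕ∞) u → ∀ p ∈ S, ∀ v : Fin 2 → ℂ,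
      fderiv ℝ ρ p v = 0 →
      fderiv ℝ u p v =
        Top2 ρ α u p * etaP p v + Xop2 b u p * etaPP ρ p v + Ups2 ρ α b u p * thetaF ρ p v :=
  differential_decomposition_general ρ hρ S hSdef hDρ hsum α b hα hb hαtan hbtan hTw1 hTw2 hXw1 hXw2
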